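/- arXiv:1710.03115 — 11 statements merged into one kernel-verified Lean document; each statement's English description precedes it below -/
import Mathlib

section
/- Let P be a partially ordered set and let M be a collection of subsets of P containing all singleton sets. Then a subset U of P is τ_M-open (i.e., whenever a net in P M-converges to a point of U, the net is eventually in U) if and only if: (1) U is an upper set, and (2) for every M₀ ∈ M having a supremum with ⋁M₀ ∈ U, there exists a finite subset N ⊆ M₀ such that every upper bound of N lies in U. -/
universe u

/-- `e` is an eventual lower bound of the net `x`. -/
def EvLB {P : Type u} [PartialOrder P] {ι : Type u} [Preorder ι]
    (x : ι → P) (e : P) : Prop :=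
  ∃ i₀ : ι, ∀ i : ι, i₀ ≤ i → e ≤ x i

/-- The net `x` M-converges to `y`: there is `M₀ ∈ M` with a supremum, all of whose
elements are eventual lower bounds of the net, whose supremum is above `y`. -/
def MConv {P : Type u} [PartialOrder P] (M : Set (Set P)) {ι : Type u} [Preorder ι]
    (x : ι → P) (y : P) : Prop :=
  ∃ M₀ ∈ M, (∀ m ∈ M₀, EvLB x m) ∧ ∃ s : P, IsLUB M₀ s ∧ y ≤ s

/-- `U` is τ_M-open: every net that M-converges to a point of `U` is eventually in `U`.
(Nets are indexed by nonempty directed preordered sets.) -/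
def TauMOpen {P : Type u} [PartialOrder P] (M : Set (Set P)) (U : Set P) : Prop :=
  ∀ (ι : Type u) [Preorder ι] [Nonempty ι],
    (∀ i j : ι, ∃ k : ι, i ≤ k ∧ j ≤ k) →
    ∀ x : ι → P, ∀ y ∈ U, MConv M x y →
    ∃ i₀ : ι, ∀ i : ι, i₀ ≤ i → x i ∈ U

/-- The M-below relation: `x ≪_M y`. -/
def MBelow {P : Type u} [PartialOrder P] (M : Set (Set P)) (x y : P) : Prop :=
  ∀ M₀ ∈ M, ∀ s : P, IsLUB M₀ s → y ≤ s → ∃ m ∈ M₀, x ≤ m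

/-- The collection σ_M of upper sets inaccessible by existing suprema of members of `M`. -/
def SigmaM {P : Type u} [PartialOrder P] (M : Set (Set P)) : Set (Set P) :=
  {U | IsUpperSet U ∧ ∀ M₀ ∈ M, ∀ s : P, IsLUB M₀ s → s ∈ U → (U ∩ M₀).Nonempty}

/-- M^∧ : the collection of lower closures of members of `M`. -/
def MHat {P : Type u} [PartialOrder P] (M : Set (Set P)) : Set (Set P) :=
  {A | ∃ M₀ ∈ M, A = {x | ∃ m ∈ M₀, x ≤ m}}

/-- `P` is M-continuous. -/
def MCont {P : Type u} [PartialOrder P] (M : Set (Set P)) : Prop :=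
  ∀ y : P, {x | MBelow M x y} ∈ MHat M ∧ IsLUB {x | MBelow M x y} y

/-!
If `U` satisfies (1) and (2), a net M-converging to `y ∈ U` through `M₀` has `⋁M₀ ∈ U`, and the
finitely many elements of the set `N` given by (2) are eventually below the net, which is then
eventually in `U`. Conversely, constant nets give (1). If (2) failed for some `M₀`, choosing for
each finite `N ⊆ M₀` an upper bound of `N` outside `U` gives a net, indexed by these `N` ordered by
inclusion, that M-converges to `⋁M₀ ∈ U` but never enters `U`.
-/

open Filter

section

variable {P : Type u} [PartialOrder P] {M : Set (Set P)} {U : Set P}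

theorem evLB_iff_eventually {ι : Type u} [Preorder ι] [IsDirectedOrder ι] [Nonempty ι]
    {x : ι → P} {e : P} : EvLB x e ↔ ∀ᶠ i in atTop, e ≤ x i :=
  eventually_atTop.symm

theorem mConv_const (hM : ∀ p : P, {p} ∈ M) {ι : Type u} [Preorder ι] [Nonempty ι]
    {a b : P} (hab : a ≤ b) :
    MConv M (fun _ : ι => b) a := by
  refine ⟨{b}, hM b, ?_, b, isLUB_singleton, hab⟩
  rintro m rfl
  exact ⟨Classical.arbitrary ι, fun _ _ => le_rfl⟩

theorem TauMOpen.isUpperSet (hM : ∀ p : P, {p} ∈ M) (hU : TauMOpen M U) : IsUpperSet U := by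
  intro a b hab ha
  obtain ⟨i, hi⟩ :=
    hU PUnit (fun _ _ => ⟨⟨⟩, le_rfl, le_rfl⟩) (fun _ => b) a ha (mConv_const hM hab)
  exact hi i le_rfl

structure OutsideUpperBound (M₀ U : Set P) : Type u where
  finset : Finset P
  point : P
  finset_subset : (finset : Set P) ⊆ M₀
  mem_upperBounds : point ∈ upperBounds (finset : Set P)
  notMem : point ∉ U

instance (M₀ U : Set P) : Preorder (OutsideUpperBound M₀ U) :=
  Preorder.lift OutsideUpperBound.finset

theorem TauMOpen.exists_finset_upperBounds_subset (hU : TauMOpen M U) {M₀ : Set P}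
    (hM₀ : M₀ ∈ M) {s : P} (hs : IsLUB M₀ s) (hsU : s ∈ U) :
    ∃ N : Finset P, (N : Set P) ⊆ M₀ ∧ upperBounds (N : Set P) ⊆ U := by
  classical
  by_contra! hbad
  have witness (N : Finset P) (hN : (N : Set P) ⊆ M₀) :
      ∃ i : OutsideUpperBound M₀ U, i.finset = N := by
    obtain ⟨p, hp, hpU⟩ := Set.not_subset.mp (hbad N hN)
    exact ⟨⟨N, p, hN, hp, hpU⟩, rfl⟩
  have : Nonempty (OutsideUpperBound M₀ U) := (witness ∅ (by simp)).nonempty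
  have hdir (i j : OutsideUpperBound M₀ U) : ∃ k, i ≤ k ∧ j ≤ k := by
    obtain ⟨k, hk⟩ := witness (i.finset ∪ j.finset)
      (by simpa using ⟨i.finset_subset, j.finset_subset⟩)
    exact ⟨k, show i.finset ⊆ k.finset from hk ▸ Finset.subset_union_left,
      show j.finset ⊆ k.finset from hk ▸ Finset.subset_union_right⟩
  have hconv : MConv M (fun i : OutsideUpperBound M₀ U => i.point) s := by
    refine ⟨M₀, hM₀, fun m hm => ?_, s, hs, le_rfl⟩
    obtain ⟨i₀, hi₀⟩ := witness {m} (by simpa using hm)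
    refine ⟨i₀, fun i hi => i.mem_upperBounds (hi ?_)⟩
    simp [hi₀]
  obtain ⟨i₀, hi₀⟩ := hU _ hdir _ s hsU hconv
  exact i₀.notMem (hi₀ i₀ le_rfl)

theorem tauMOpen_of_finset_upperBounds_subset (hU : IsUpperSet U)
    (hfin : ∀ M₀ ∈ M, ∀ s : P, IsLUB M₀ s → s ∈ U →
      ∃ N : Finset P, (N : Set P) ⊆ M₀ ∧ upperBounds (N : Set P) ⊆ U) :
    TauMOpen M U := by
  rintro ι _ _ hdir x y hy ⟨M₀, hM₀, hev, s, hs, hys⟩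
  have : IsDirectedOrder ι := ⟨hdir⟩
  obtain ⟨N, hNM₀, hNU⟩ := hfin M₀ hM₀ s hs (hU hys hy)
  have hN : ∀ᶠ i in atTop, ∀ m ∈ N, m ≤ x i :=
    (eventually_all_finset N).2 fun m hm => evLB_iff_eventually.1 (hev m (hNM₀ hm))
  exact eventually_atTop.1 (hN.mono fun i hi => hNU hi)

end

/-- A subset `U` of a poset `P` is τ_M-open iff (1) `U` is an upper set and
(2) for every `M₀ ∈ M` with a supremum lying in `U`, there is a finite `N ⊆ M₀`
all of whose upper bounds lie in `U`. -/
theorem stmt0 {P : Type u} [PartialOrder P] (M : Set (Set P))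
    (hM : ∀ p : P, {p} ∈ M) (U : Set P) :
    TauMOpen M U ↔
      IsUpperSet U ∧
        ∀ M₀ ∈ M, ∀ s : P, IsLUB M₀ s → s ∈ U →
          ∃ N : Finset P, (N : Set P) ⊆ M₀ ∧ upperBounds (N : Set P) ⊆ U :=
  ⟨fun hU => ⟨hU.isUpperSet hM, fun _ hM₀ _ hs hsU =>
      hU.exists_finset_upperBounds_subset hM₀ hs hsU⟩,
    fun ⟨hup, hfin⟩ => tauMOpen_of_finset_upperBounds_subset hup hfin⟩
end

section
/- Let P be a partially ordered set and let M be a collection of subsets of P containing all singleton sets. Then every member of σ_M is τ_M-open: if U ∈ σ_M and a net (x_i) in P M-converges to a point y ∈ U, then x_i ∈ U eventually. -/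
universe u

theorem EvLB.eventually_mem_of_isUpperSet {P : Type u} [PartialOrder P] {ι : Type u}
    [Preorder ι] {x : ι → P} {e : P} (he : EvLB x e) {U : Set P} (hU : IsUpperSet U)
    (heU : e ∈ U) : ∃ i₀ : ι, ∀ i : ι, i₀ ≤ i → x i ∈ U :=
  let ⟨i₀, hi₀⟩ := he
  ⟨i₀, fun i hi => hU (hi₀ i hi) heU⟩

theorem MConv.exists_evLB_mem_of_mem_sigmaM {P : Type u} [PartialOrder P] {M : Set (Set P)}
    {ι : Type u} [Preorder ι] {x : ι → P} {y : P} (hx : MConv M x y) {U : Set P}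
    (hU : U ∈ SigmaM M) (hy : y ∈ U) : ∃ e ∈ U, EvLB x e := by
  obtain ⟨M₀, hM₀, hlb, s, hs, hys⟩ := hx
  obtain ⟨e, heU, heM₀⟩ := hU.2 M₀ hM₀ s hs (hU.1 hys hy)
  exact ⟨e, heU, hlb e heM₀⟩

theorem stmt1_general {P : Type u} [PartialOrder P] (M : Set (Set P))
    (U : Set P) (hU : U ∈ SigmaM M) :
    TauMOpen M U := by
  intro ι _ _ _ x y hy hx
  obtain ⟨e, heU, he⟩ := hx.exists_evLB_mem_of_mem_sigmaM hU hy
  exact he.eventually_mem_of_isUpperSet hU.1 heU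

/-- Every member of σ_M is τ_M-open. -/
theorem stmt1 {P : Type u} [PartialOrder P] (M : Set (Set P))
    (hM : ∀ p : P, {p} ∈ M) (U : Set P) (hU : U ∈ SigmaM M) :
    TauMOpen M U :=
  stmt1_general M U hU
end

section
/- Let P be a partially ordered set, M a collection of subsets of P containing all singleton sets, and n = (x_i) a net in P. If n M-converges to y, then every element of ↡_M y is an eventual lower bound of n. Conversely, if P is M-continuous and every element of ↡_M y is an eventual lower bound of n, then n M-converges to y. -/
universe u

theorem EvLB.of_le {P : Type u} [PartialOrder P] {ι : Type u} [Preorder ι] {x : ι → P}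
    {e e' : P} (hx : EvLB x e') (he : e ≤ e') : EvLB x e :=
  let ⟨i₀, hi₀⟩ := hx
  ⟨i₀, fun i hi => he.trans (hi₀ i hi)⟩

theorem isLUB_lowerClosure_iff {α : Type*} [Preorder α] {s : Set α} {a : α} :
    IsLUB (lowerClosure s : Set α) a ↔ IsLUB s a := by
  simp only [IsLUB, upperBounds_lowerClosure]

theorem MConv.evLB_of_mBelow {P : Type u} [PartialOrder P] {M : Set (Set P)} {ι : Type u}
    [Preorder ι] {n : ι → P} {x y : P} (hconv : MConv M n y) (hxy : MBelow M x y) :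
    EvLB n x :=
  let ⟨M₀, hM₀, hev, s, hlub, hys⟩ := hconv
  let ⟨m, hm, hxm⟩ := hxy M₀ hM₀ s hlub hys
  (hev m hm).of_le hxm

theorem MCont.mConv_of_evLB {P : Type u} [PartialOrder P] {M : Set (Set P)} (hcont : MCont M)
    {ι : Type u} [Preorder ι] {n : ι → P} {y : P} (hev : ∀ x : P, MBelow M x y → EvLB n x) :
    MConv M n y := by
  obtain ⟨⟨M₀, hM₀, hbelow⟩, hlub⟩ := hcont y
  have hbelow : {x | MBelow M x y} = (lowerClosure M₀ : Set P) := hbelow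
  rw [hbelow, isLUB_lowerClosure_iff] at hlub
  refine ⟨M₀, hM₀, fun m hm => hev m ?_, y, hlub, le_rfl⟩
  exact (Set.ext_iff.mp hbelow m).2 (subset_lowerClosure hm)

theorem stmt3_general {P : Type u} [PartialOrder P] (M : Set (Set P))
    (ι : Type u) [Preorder ι]
    (n : ι → P) (y : P) :
    (MConv M n y → ∀ x : P, MBelow M x y → EvLB n x) ∧
    (MCont M → (∀ x : P, MBelow M x y → EvLB n x) → MConv M n y) :=
  ⟨fun hconv _ hxy => hconv.evLB_of_mBelow hxy, fun hcont hev => hcont.mConv_of_evLB hev⟩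

/-- If a net `n` M-converges to `y`, then every element of `↡_M y` is an eventual lower
bound of `n`; the converse holds when `P` is M-continuous. -/
theorem stmt3 {P : Type u} [PartialOrder P] (M : Set (Set P))
    (hM : ∀ p : P, {p} ∈ M)
    (ι : Type u) [Preorder ι] [Nonempty ι]
    (hdir : ∀ i j : ι, ∃ k : ι, i ≤ k ∧ j ≤ k)
    (n : ι → P) (y : P) :
    (MConv M n y → ∀ x : P, MBelow M x y → EvLB n x) ∧
    (MCont M → (∀ x : P, MBelow M x y → EvLB n x) → MConv M n y) :=
  stmt3_general M ι n y
end

section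
/- Let P be a partially ordered set and let M be a collection of subsets of P containing all singleton sets. Then P is M-continuous if and only if for every y ∈ P there exists M₀ ∈ M having a supremum such that M₀ ⊆ ↡_M y and y ≤ ⋁M₀. -/
universe u

namespace MBelow

variable {P : Type u} [PartialOrder P] {M : Set (Set P)}

theorem mono_left {x x' y : P} (hx : x ≤ x') (h : MBelow M x' y) : MBelow M x y :=
  fun M₀ hM₀ s hs hys ↦
    let ⟨m, hm, hx'm⟩ := h M₀ hM₀ s hs hys
    ⟨m, hm, hx.trans hx'm⟩

theorem le (hM : ∀ p : P, {p} ∈ M) {x y : P} (h : MBelow M x y) : x ≤ y := by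
  obtain ⟨m, rfl, hxm⟩ := h {y} (hM y) y isLUB_singleton le_rfl
  exact hxm

theorem setOf_eq_lowerClosure {y s : P} {M₀ : Set P} (hM₀ : M₀ ∈ M)
    (hsub : M₀ ⊆ {x | MBelow M x y}) (hs : IsLUB M₀ s) (hys : y ≤ s) :
    {x | MBelow M x y} = lowerClosure M₀ :=
  Set.Subset.antisymm (fun _ hx ↦ hx M₀ hM₀ s hs hys)
    fun _ ⟨_, hm, hxm⟩ ↦ mono_left hxm (hsub hm)

end MBelow

/-- `P` is M-continuous iff for every `y` there is `M₀ ∈ M` with a supremum,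
contained in `↡_M y`, whose supremum is above `y`. -/
theorem stmt5 {P : Type u} [PartialOrder P] (M : Set (Set P))
    (hM : ∀ p : P, {p} ∈ M) :
    MCont M ↔
      ∀ y : P, ∃ M₀ ∈ M, M₀ ⊆ {x | MBelow M x y} ∧ ∃ s : P, IsLUB M₀ s ∧ y ≤ s := by
  constructor
  · intro hcont y
    obtain ⟨⟨M₀, hM₀, hEq⟩, hlub⟩ := hcont y
    change _ = (lowerClosure M₀ : Set P) at hEq
    rw [hEq] at hlub ⊢
    exact ⟨M₀, hM₀, subset_lowerClosure, y, isLUB_lowerClosure_iff.1 hlub, le_rfl⟩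
  · intro h y
    obtain ⟨M₀, hM₀, hsub, s, hs, hys⟩ := h y
    refine ⟨⟨M₀, hM₀, MBelow.setOf_eq_lowerClosure hM₀ hsub hs hys⟩,
      fun _ hx ↦ MBelow.le hM hx, fun u hu ↦ hys.trans (hs.2 fun _ hm ↦ hu (hsub hm))⟩
end

section
/- Let P be a partially ordered set and let M be a collection of subsets of P containing all singleton sets. If the relation ≪_M is interpolative (i.e., x ≪_M z implies x ≪_M y ≪_M z for some y), then ↟_M Y ∈ σ_M for every subset Y ⊆ P. -/
universe u

theorem MBelow.trans_le {P : Type u} [PartialOrder P] {M : Set (Set P)} {x y z : P}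
    (hxy : MBelow M x y) (hyz : y ≤ z) : MBelow M x z :=
  fun M₀ hM₀ s hs hzs => hxy M₀ hM₀ s hs (hyz.trans hzs)

theorem isUpperSet_setOf_mBelow {P : Type u} [PartialOrder P] (M : Set (Set P)) (Y : Set P) :
    IsUpperSet {x | ∃ y ∈ Y, MBelow M y x} :=
  fun _ _ hab ⟨y, hy, hya⟩ => ⟨y, hy, hya.trans_le hab⟩

theorem stmt6_general {P : Type u} [PartialOrder P] (M : Set (Set P))
    (hint : ∀ x z : P, MBelow M x z → ∃ y : P, MBelow M x y ∧ MBelow M y z)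
    (Y : Set P) :
    {x | ∃ y ∈ Y, MBelow M y x} ∈ SigmaM M := by
  refine ⟨isUpperSet_setOf_mBelow M Y, ?_⟩
  rintro M₀ hM₀ s hs ⟨y, hy, hys⟩
  -- Interpolate `y ≪ w ≪ s`; then `w ≪ ⋁ M₀` puts `w` below some `m ∈ M₀`, and `y ≪ w ≤ m`.
  obtain ⟨w, hyw, hws⟩ := hint y s hys
  obtain ⟨m, hm, hwm⟩ := hws M₀ hM₀ s hs le_rfl
  exact ⟨m, ⟨y, hy, hyw.trans_le hwm⟩, hm⟩

/-- If `≪_M` is interpolative then `↟_M Y ∈ σ_M` for every `Y ⊆ P`. -/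
theorem stmt6 {P : Type u} [PartialOrder P] (M : Set (Set P))
    (hM : ∀ p : P, {p} ∈ M)
    (hint : ∀ x z : P, MBelow M x z → ∃ y : P, MBelow M x y ∧ MBelow M y z)
    (Y : Set P) :
    {x | ∃ y ∈ Y, MBelow M y x} ∈ SigmaM M :=
  stmt6_general M hint Y
end

section
/- Let P be a partially ordered set and let M be a collection of subsets of P containing all singleton sets. If P is M-continuous, then for every y ∈ P, y is the least upper bound of ↡_M(↡_M y) = ⋃_{x ∈ ↡_M y} ↡_M x. Moreover, P is strongly M-continuous (i.e., M-continuous with ≪_M interpolative) if and only if for every y ∈ P, ↡_M(↡_M y) ∈ M^∧ and y is the least upper bound of ↡_M(↡_M y). -/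
universe u

section MBelow

variable {P : Type u} [PartialOrder P] {M : Set (Set P)}

theorem MBelow.le_s7 (hM : ∀ p : P, {p} ∈ M) {x y : P} (h : MBelow M x y) : x ≤ y := by
  obtain ⟨m, rfl, hxm⟩ := h {y} (hM y) y isLUB_singleton le_rfl
  exact hxm

theorem MBelow.of_le_left {x x' y : P} (hle : x ≤ x') (h : MBelow M x' y) : MBelow M x y :=
  fun M₀ hM₀ s hs hys ↦
    let ⟨m, hm, hx'm⟩ := h M₀ hM₀ s hs hys
    ⟨m, hm, hle.trans hx'm⟩

theorem setOf_MBelow_MBelow_subset (hM : ∀ p : P, {p} ∈ M) (y : P) :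
    {z | ∃ x : P, MBelow M x y ∧ MBelow M z x} ⊆ {z | MBelow M z y} :=
  fun _ ⟨_, hxy, hzx⟩ ↦ hxy.of_le_left (hzx.le_s7 hM)

theorem setOf_MBelow_MBelow_eq (hM : ∀ p : P, {p} ∈ M)
    (hint : ∀ x z : P, MBelow M x z → ∃ y : P, MBelow M x y ∧ MBelow M y z) (y : P) :
    {z | ∃ x : P, MBelow M x y ∧ MBelow M z x} = {z | MBelow M z y} := by
  refine (setOf_MBelow_MBelow_subset hM y).antisymm fun z hzy ↦ ?_
  obtain ⟨x, hzx, hxy⟩ := hint z y hzy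
  exact ⟨x, hxy, hzx⟩

theorem isLUB_setOf_MBelow_MBelow (hM : ∀ p : P, {p} ∈ M) (hc : MCont M) (y : P) :
    IsLUB {z | ∃ x : P, MBelow M x y ∧ MBelow M z x} y := by
  refine ⟨fun z hz ↦ (setOf_MBelow_MBelow_subset hM y hz).le_s7 hM, fun u hu ↦ ?_⟩
  refine (hc y).2.2 fun x hxy ↦ (hc x).2.2 fun z hzx ↦ ?_
  exact hu ⟨x, hxy, hzx⟩

theorem MBelow.exists_MBelow_MBelow_of_mem_MHat {y : P}
    (hhat : {z | ∃ x : P, MBelow M x y ∧ MBelow M z x} ∈ MHat M)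
    (hlub : IsLUB {z | ∃ x : P, MBelow M x y ∧ MBelow M z x} y) {z : P} (hzy : MBelow M z y) :
    ∃ x : P, MBelow M z x ∧ MBelow M x y := by
  obtain ⟨M₀, hM₀, hclosure⟩ := hhat
  rw [hclosure] at hlub
  have hlub₀ : IsLUB M₀ y := isLUB_lowerClosure_iff.1 hlub
  obtain ⟨m, hm, hzm⟩ := hzy M₀ hM₀ y hlub₀ le_rfl
  have hm' : m ∈ {z | ∃ x : P, MBelow M x y ∧ MBelow M z x} := hclosure ▸ ⟨m, hm, le_rfl⟩
  obtain ⟨x, hxy, hmx⟩ := hm'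
  exact ⟨x, hmx.of_le_left hzm, hxy⟩

end MBelow

/-- If `P` is M-continuous then `y = ⋁ ↡_M(↡_M y)` for every `y`; moreover `P` is strongly
M-continuous iff for every `y`, `↡_M(↡_M y) ∈ M^∧` and `y = ⋁ ↡_M(↡_M y)`. -/
theorem stmt7 {P : Type u} [PartialOrder P] (M : Set (Set P))
    (hM : ∀ p : P, {p} ∈ M) :
    (MCont M → ∀ y : P, IsLUB {z | ∃ x : P, MBelow M x y ∧ MBelow M z x} y) ∧
    ((MCont M ∧ ∀ x z : P, MBelow M x z → ∃ y : P, MBelow M x y ∧ MBelow M y z) ↔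
      ∀ y : P, {z | ∃ x : P, MBelow M x y ∧ MBelow M z x} ∈ MHat M ∧
        IsLUB {z | ∃ x : P, MBelow M x y ∧ MBelow M z x} y) := by
  refine ⟨isLUB_setOf_MBelow_MBelow hM, fun ⟨hc, hint⟩ y ↦ ?_, fun h ↦ ?_⟩
  · rw [setOf_MBelow_MBelow_eq hM hint y]
    exact hc y
  · have hint : ∀ x z : P, MBelow M x z → ∃ y : P, MBelow M x y ∧ MBelow M y z :=
      fun _ z ↦ MBelow.exists_MBelow_MBelow_of_mem_MHat (h z).1 (h z).2
    refine ⟨fun y ↦ ?_, hint⟩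
    rw [← setOf_MBelow_MBelow_eq hM hint y]
    exact h y
end

section
/- Let X be a T0 topological space. Then X satisfies: for every y ∈ X, ↡_I y is the lower closure of some irreducible subset of X and y is the least upper bound of ↡_I y, if and only if for every y ∈ X, the set ↡_I y is itself irreducible and y is the least upper bound of ↡_I y. -/
universe u

/-- The specialisation order of a topological space: `x ≤ y` iff `x ∈ closure {y}`. -/
def sle {X : Type u} [TopologicalSpace X] (x y : X) : Prop :=
  x ∈ closure ({y} : Set X)

/-- Upper bounds with respect to the specialisation order. -/
def sUB {X : Type u} [TopologicalSpace X] (A : Set X) : Set X :=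
  {u | ∀ a ∈ A, sle a u}

/-- `s` is the least upper bound of `A` with respect to the specialisation order. -/
def sIsLUB {X : Type u} [TopologicalSpace X] (A : Set X) (s : X) : Prop :=
  s ∈ sUB A ∧ ∀ u ∈ sUB A, sle s u

/-- `x ≪_I y`: for every irreducible set `E` having a supremum above `y`,
some element of `E` is above `x`. -/
def IBelow {X : Type u} [TopologicalSpace X] (x y : X) : Prop :=
  ∀ E : Set X, IsIrreducible E → ∀ s : X, sIsLUB E s → sle y s → ∃ e ∈ E, sle x e

/-- `X` is I-continuous: for every `y`, the set `↡_I y` is irreducible with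
least upper bound `y`. -/
def IContinuous (X : Type u) [TopologicalSpace X] : Prop :=
  ∀ y : X, IsIrreducible {x | IBelow x y} ∧ sIsLUB {x | IBelow x y} y

/-- `X` is I-stable: `↟_I U` is open for every open `U`. -/
def IStable (X : Type u) [TopologicalSpace X] : Prop :=
  ∀ U : Set X, IsOpen U → IsOpen {x : X | ∃ a ∈ U, IBelow a x}

/-- `X` is sup-sober: every closed irreducible set with a supremum is the closure
of that supremum. -/
def SupSober (X : Type u) [TopologicalSpace X] : Prop :=
  ∀ F : Set X, IsClosed F → IsIrreducible F → ∀ s : X, sIsLUB F s → F = closure ({s} : Set X)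

/-- The collection σ_I: upper sets (w.r.t. specialisation) inaccessible by suprema of
irreducible sets. -/
def sigmaI (X : Type u) [TopologicalSpace X] : Set (Set X) :=
  {U | (∀ a ∈ U, ∀ b : X, sle a b → b ∈ U) ∧
       ∀ E : Set X, IsIrreducible E → ∀ s : X, sIsLUB E s → s ∈ U → (U ∩ E).Nonempty}

/-- The irreducibly derived topology τ_SI: open sets inaccessible by suprema of
irreducible sets. -/
def tauSI (X : Type u) [TopologicalSpace X] : Set (Set X) :=
  {U | IsOpen U ∧ ∀ E : Set X, IsIrreducible E → ∀ s : X, sIsLUB E s → s ∈ U → (E ∩ U).Nonempty}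

/-- The net `x` I-converges to `y`: there is an irreducible set `E` with a supremum above `y`,
all of whose elements are eventual lower bounds of the net. -/
def IConv {X : Type u} [TopologicalSpace X] {ι : Type u} [Preorder ι]
    (x : ι → X) (y : X) : Prop :=
  ∃ E : Set X, IsIrreducible E ∧
    (∀ e ∈ E, ∃ i₀ : ι, ∀ i : ι, i₀ ≤ i → sle e (x i)) ∧
    ∃ s : X, sIsLUB E s ∧ sle y s

/-- `D` is directed with respect to the specialisation order. -/
def sDirectedOn {X : Type u} [TopologicalSpace X] (D : Set X) : Prop :=
  ∀ a ∈ D, ∀ b ∈ D, ∃ c ∈ D, sle a c ∧ sle b c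

/-- Way-below in the specialisation poset, via nonempty directed sets. -/
def sWayBelow {X : Type u} [TopologicalSpace X] (x y : X) : Prop :=
  ∀ D : Set X, D.Nonempty → sDirectedOn D → ∀ s : X, sIsLUB D s → sle y s → ∃ d ∈ D, sle x d

/-- `X` is a DI space: the supremum of any irreducible set is also attained as the supremum
of a nonempty directed subset of its lower closure. -/
def DISpace (X : Type u) [TopologicalSpace X] : Prop :=
  ∀ E : Set X, IsIrreducible E → ∀ s : X, sIsLUB E s →
    ∃ D : Set X, D.Nonempty ∧ sDirectedOn D ∧ (∀ d ∈ D, ∃ e ∈ E, sle d e) ∧ sIsLUB D s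

/-- `U` is τ_I-open: every net that I-converges to a point of `U` is eventually in `U`. -/
def TauIOpen {X : Type u} [TopologicalSpace X] (U : Set X) : Prop :=
  ∀ (ι : Type u) [Preorder ι] [Nonempty ι],
    (∀ i j : ι, ∃ k : ι, i ≤ k ∧ j ≤ k) →
    ∀ x : ι → X, ∀ y ∈ U, IConv x y →
    ∃ i₀ : ι, ∀ i : ι, i₀ ≤ i → x i ∈ U

/-!
A set and its lower closure have the same topological closure, so one is irreducible exactly
when the other is. Since `≪_I` is monotone in its left argument, `↡_I y` is a lower set, hence its
own lower closure; this gives the converse with `E = ↡_I y`.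
-/

section SpecializationOrder

variable {X : Type u} [TopologicalSpace X]

theorem sle_iff_specializes {x y : X} : sle x y ↔ y ⤳ x :=
  specializes_iff_mem_closure.symm

theorem sle_refl (x : X) : sle x x :=
  sle_iff_specializes.2 (specializes_refl x)

theorem sle_trans {x y z : X} (hxy : sle x y) (hyz : sle y z) : sle x z :=
  sle_iff_specializes.2 ((sle_iff_specializes.1 hyz).trans (sle_iff_specializes.1 hxy))

theorem closure_setOf_exists_sle (E : Set X) :
    closure {x | ∃ e ∈ E, sle x e} = closure E := by
  have lower_subset_closure : {x | ∃ e ∈ E, sle x e} ⊆ closure E := by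
    rintro x ⟨e, he, hxe⟩
    exact closure_mono (Set.singleton_subset_iff.2 he) hxe
  exact (closure_minimal lower_subset_closure isClosed_closure).antisymm
    (closure_mono fun e he => ⟨e, he, sle_refl e⟩)

theorem IsIrreducible.setOf_exists_sle {E : Set X} (hE : IsIrreducible E) :
    IsIrreducible {x | ∃ e ∈ E, sle x e} := by
  rw [← isIrreducible_iff_closure, closure_setOf_exists_sle]
  exact hE.closure

theorem IBelow.of_sle_left {x x' y : X} (hxx' : sle x x') (h : IBelow x' y) : IBelow x y :=
  fun E hE s hs hys =>
    let ⟨e, he, hx'e⟩ := h E hE s hs hys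
    ⟨e, he, sle_trans hxx' hx'e⟩

theorem setOf_exists_sle_IBelow (y : X) :
    {x | ∃ e ∈ {x | IBelow x y}, sle x e} = {x | IBelow x y} :=
  Set.Subset.antisymm (fun _ ⟨_, he, hxe⟩ => he.of_sle_left hxe)
    fun x hx => ⟨x, hx, sle_refl x⟩

end SpecializationOrder

theorem stmt8_general {X : Type u} [TopologicalSpace X] :
    (∀ y : X,
        (∃ E : Set X, IsIrreducible E ∧ {x | IBelow x y} = {x | ∃ e ∈ E, sle x e}) ∧
        sIsLUB {x | IBelow x y} y) ↔
    (∀ y : X, IsIrreducible {x | IBelow x y} ∧ sIsLUB {x | IBelow x y} y) := by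
  constructor
  · intro h y
    obtain ⟨⟨E, hE, hBelow⟩, hlub⟩ := h y
    exact ⟨hBelow ▸ hE.setOf_exists_sle, hlub⟩
  · intro h y
    obtain ⟨hirr, hlub⟩ := h y
    exact ⟨⟨_, hirr, (setOf_exists_sle_IBelow y).symm⟩, hlub⟩

/-- For a T0 space `X`: every `↡_I y` is the lower closure of some irreducible set with
`y = ⋁ ↡_I y`, iff every `↡_I y` is itself irreducible with `y = ⋁ ↡_I y`. -/
theorem stmt8 {X : Type u} [TopologicalSpace X] [T0Space X] :
    (∀ y : X,
        (∃ E : Set X, IsIrreducible E ∧ {x | IBelow x y} = {x | ∃ e ∈ E, sle x e}) ∧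
        sIsLUB {x | IBelow x y} y) ↔
    (∀ y : X, IsIrreducible {x | IBelow x y} ∧ sIsLUB {x | IBelow x y} y) :=
  stmt8_general
end

section
/- Let X be an I-continuous T0 space. Then X is I-stable if and only if the map sending x ∈ X to ↡_I x is continuous from X to the powerset of X equipped with the topology generated by the sets ◇U = {A ⊆ X | A ∩ U ≠ ∅} for U open in X (the lower Vietoris topology). -/
universe u

abbrev lowerVietoris (Y : Type*) [TopologicalSpace Y] : TopologicalSpace (Set Y) :=
  TopologicalSpace.generateFrom {S | ∃ U : Set Y, IsOpen U ∧ S = {A | (A ∩ U).Nonempty}}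

theorem continuous_lowerVietoris_iff {X Y : Type*} [TopologicalSpace X] [TopologicalSpace Y]
    {f : X → Set Y} :
    @Continuous X (Set Y) _ (lowerVietoris Y) f ↔
      ∀ U : Set Y, IsOpen U → IsOpen {x | (f x ∩ U).Nonempty} := by
  rw [lowerVietoris, continuous_generateFrom_iff]
  constructor
  · exact fun h U hU => h _ ⟨U, hU, rfl⟩
  · rintro h _ ⟨U, hU, rfl⟩
    exact h U hU

theorem setOf_exists_IBelow_eq_inter_nonempty {X : Type u} [TopologicalSpace X] (U : Set X) :
    {x : X | ∃ a ∈ U, IBelow a x} = {y | ({x | IBelow x y} ∩ U).Nonempty} := by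
  ext y
  simp only [Set.mem_ofPred_eq, Set.Nonempty, Set.mem_inter_iff, and_comm]

theorem stmt10_general {X : Type u} [TopologicalSpace X] :
    IStable X ↔
      @Continuous X (Set X) _
        (TopologicalSpace.generateFrom
          {S : Set (Set X) | ∃ U : Set X, IsOpen U ∧ S = {A : Set X | (A ∩ U).Nonempty}})
        (fun y : X => {x | IBelow x y}) := by
  simp only [IStable, setOf_exists_IBelow_eq_inter_nonempty]
  exact continuous_lowerVietoris_iff.symm

/-- An I-continuous T0 space is I-stable iff `x ↦ ↡_I x` is continuous into the powerset
with the lower Vietoris topology. -/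
theorem stmt10 {X : Type u} [TopologicalSpace X] [T0Space X]
    (hcont : IContinuous X) :
    IStable X ↔
      @Continuous X (Set X) _
        (TopologicalSpace.generateFrom
          {S : Set (Set X) | ∃ U : Set X, IsOpen U ∧ S = {A : Set X | (A ∩ U).Nonempty}})
        (fun y : X => {x | IBelow x y}) :=
  stmt10_general
end

section
/- Let X be an I-stable, I-continuous T0 space. Then for every irreducible subset E of X, the set ↡_I E = ⋃_{e ∈ E} ↡_I e is irreducible. -/
universe u

/- Two open sets met by the union pull back under `hopen` to two open sets met by `E`; a common
point `e` of these has an irreducible fibre `F e` meeting both. -/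
theorem IsIrreducible.biUnion_of_isOpen_setOf_inter_nonempty {X Y : Type*}
    [TopologicalSpace X] [TopologicalSpace Y] {E : Set X} (hE : IsIrreducible E)
    {F : X → Set Y} (hF : ∀ e ∈ E, IsIrreducible (F e))
    (hopen : ∀ U : Set Y, IsOpen U → IsOpen {e | (F e ∩ U).Nonempty}) :
    IsIrreducible (⋃ e ∈ E, F e) := by
  obtain ⟨e, he⟩ := hE.nonempty
  refine ⟨(hF e he).nonempty.mono (Set.subset_biUnion_of_mem he), ?_⟩
  intro U V hU hV ⟨a, haF, haU⟩ ⟨b, hbF, hbV⟩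
  obtain ⟨e₁, he₁, ha⟩ := Set.mem_iUnion₂.mp haF
  obtain ⟨e₂, he₂, hb⟩ := Set.mem_iUnion₂.mp hbF
  obtain ⟨e, heE, heU, heV⟩ :=
    hE.2 _ _ (hopen U hU) (hopen V hV) ⟨e₁, he₁, a, ha, haU⟩ ⟨e₂, he₂, b, hb, hbV⟩
  obtain ⟨c, hc, hcUV⟩ := (hF e heE).2 U V hU hV heU heV
  exact ⟨c, Set.mem_biUnion heE hc, hcUV⟩

theorem stmt11_general {X : Type u} [TopologicalSpace X]
    (hstable : IStable X) (hcont : IContinuous X)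
    (E : Set X) (hE : IsIrreducible E) :
    IsIrreducible {x : X | ∃ e ∈ E, IBelow x e} := by
  have hunion : {x : X | ∃ e ∈ E, IBelow x e} = ⋃ e ∈ E, {x | IBelow x e} := by
    ext; simp
  rw [hunion]
  refine hE.biUnion_of_isOpen_setOf_inter_nonempty (fun e _ => (hcont e).1) fun U hU => ?_
  simpa only [Set.Nonempty, Set.mem_inter_iff, Set.mem_ofPred_eq, and_comm] using hstable U hU

/-- In an I-stable I-continuous T0 space, `↡_I E` is irreducible for every irreducible `E`. -/
theorem stmt11 {X : Type u} [TopologicalSpace X] [T0Space X]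
    (hstable : IStable X) (hcont : IContinuous X)
    (E : Set X) (hE : IsIrreducible E) :
    IsIrreducible {x : X | ∃ e ∈ E, IBelow x e} :=
  stmt11_general hstable hcont E hE
end

section
/- Let X be an I-continuous T0 space such that ↟_I x ∈ σ_I for every x ∈ X. Then the relation ≪_I has the interpolation property: whenever x ≪_I z, there exists y ∈ X with x ≪_I y and y ≪_I z. -/
universe u

theorem IContinuous.exists_iBelow_mem_of_mem_sigmaI {X : Type u} [TopologicalSpace X]
    (hcont : IContinuous X) {U : Set X} (hU : U ∈ sigmaI X) {z : X} (hz : z ∈ U) :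
    ∃ y ∈ U, IBelow y z :=
  hU.2 _ (hcont z).1 z (hcont z).2 hz

theorem stmt14_general {X : Type u} [TopologicalSpace X]
    (hcont : IContinuous X)
    (hsig : ∀ x : X, {z : X | IBelow x z} ∈ sigmaI X)
    (x z : X) (hxz : IBelow x z) :
    ∃ y : X, IBelow x y ∧ IBelow y z :=
  hcont.exists_iBelow_mem_of_mem_sigmaI (hsig x) hxz

/-- If `X` is I-continuous and `↟_I x ∈ σ_I` for all `x`, then `≪_I` interpolates. -/
theorem stmt14 {X : Type u} [TopologicalSpace X] [T0Space X]
    (hcont : IContinuous X)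
    (hsig : ∀ x : X, {z : X | IBelow x z} ∈ sigmaI X)
    (x z : X) (hxz : IBelow x z) :
    ∃ y : X, IBelow x y ∧ IBelow y z :=
  stmt14_general hcont hsig x z hxz
end

section
/- Let X be an I-stable, I-continuous T0 space. Then for every open set U of X, ↟_I U equals the interior of U with respect to the topology τ_SI. -/
/-!
`↟_I U` is open by I-stability and lies in `U` because `≪_I` refines the specialisation order,
for which open sets are upper sets. It is inaccessible by suprema of irreducible sets thanks to
interpolation: if `a ≪_I b ≪_I ⋁E` then some `e ∈ E` lies above `b`, whence `a ≪_I e`.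
Interpolation holds because `⋃_{b ≪_I s} ↡_I b` is irreducible (I-stability turns
open sets meeting it into open sets meeting `↡_I s`) with supremum `s`. Conversely, a τ_SI-open
`V ∋ x` must meet the irreducible set `↡_I x`, whose supremum is `x`.
-/

universe u

section

variable {X : Type u} [TopologicalSpace X]

def iLower (y : X) : Set X := {x | IBelow x y}

def iUpper (A : Set X) : Set X := {x | ∃ a ∈ A, IBelow a x}

theorem sle_trans_s15 {a b c : X} (hab : sle a b) (hbc : sle b c) : sle a c :=
  closure_minimal (Set.singleton_subset_iff.mpr hbc) isClosed_closure hab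

theorem IsOpen.mem_of_sle {U : Set X} (hU : IsOpen U) {a b : X} (ha : a ∈ U) (hab : sle a b) :
    b ∈ U := by
  obtain ⟨c, hcU, rfl⟩ := mem_closure_iff.mp hab U hU ha
  exact hcU

theorem sIsLUB_singleton (x : X) : sIsLUB ({x} : Set X) x :=
  ⟨fun _ ha => ha ▸ sle_refl x, fun _ hu => hu x rfl⟩

theorem sle_of_IBelow {a x : X} (h : IBelow a x) : sle a x := by
  obtain ⟨e, rfl, hae⟩ := h {x} isIrreducible_singleton x (sIsLUB_singleton x) (sle_refl x)
  exact hae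

theorem IBelow.mono_left {a b c : X} (hab : sle a b) (h : IBelow b c) : IBelow a c := by
  intro E hE s hs hcs
  obtain ⟨e, he, hbe⟩ := h E hE s hs hcs
  exact ⟨e, he, sle_trans_s15 hab hbe⟩

theorem IBelow.mono_right {a b c : X} (h : IBelow a b) (hbc : sle b c) : IBelow a c :=
  fun E hE s hs hcs => h E hE s hs (sle_trans_s15 hbc hcs)

theorem iUpper_subset {U : Set X} (hU : IsOpen U) : iUpper U ⊆ U := by
  rintro x ⟨a, haU, hax⟩
  exact hU.mem_of_sle haU (sle_of_IBelow hax)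

theorem isIrreducible_iLower_iLower (hstable : IStable X) (hcont : IContinuous X) (s : X) :
    IsIrreducible {c | ∃ b ∈ iLower s, c ∈ iLower b} := by
  refine ⟨?_, ?_⟩
  · obtain ⟨b, hbs⟩ := (hcont s).1.1
    obtain ⟨c, hcb⟩ := (hcont b).1.1
    exact ⟨c, b, hbs, hcb⟩
  · rintro u v hu hv ⟨c₁, ⟨b₁, hb₁s, hc₁b₁⟩, hc₁u⟩ ⟨c₂, ⟨b₂, hb₂s, hc₂b₂⟩, hc₂v⟩
    obtain ⟨b, hbs, ⟨a₁, ha₁u, ha₁b⟩, ⟨a₂, ha₂v, ha₂b⟩⟩ :=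
      (hcont s).1.2 _ _ (hstable u hu) (hstable v hv)
        ⟨b₁, hb₁s, c₁, hc₁u, hc₁b₁⟩ ⟨b₂, hb₂s, c₂, hc₂v, hc₂b₂⟩
    obtain ⟨c, hcb, hcuv⟩ := (hcont b).1.2 u v hu hv ⟨a₁, ha₁b, ha₁u⟩ ⟨a₂, ha₂b, ha₂v⟩
    exact ⟨c, ⟨b, hbs, hcb⟩, hcuv⟩

theorem sIsLUB_iLower_iLower (hcont : IContinuous X) (s : X) :
    sIsLUB {c | ∃ b ∈ iLower s, c ∈ iLower b} s :=
  ⟨fun _ ⟨_, hbs, hcb⟩ => sle_trans_s15 (sle_of_IBelow hcb) (sle_of_IBelow hbs),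
    fun u hu => (hcont s).2.2 u fun b hbs => (hcont b).2.2 u fun c hcb => hu c ⟨b, hbs, hcb⟩⟩

theorem IBelow.exists_interpolate (hstable : IStable X) (hcont : IContinuous X) {a s : X}
    (h : IBelow a s) : ∃ b, IBelow a b ∧ IBelow b s := by
  obtain ⟨c, ⟨b, hbs, hcb⟩, hac⟩ := h _ (isIrreducible_iLower_iLower hstable hcont s) s
    (sIsLUB_iLower_iLower hcont s) (sle_refl s)
  exact ⟨b, IBelow.mono_left hac hcb, hbs⟩

theorem iUpper_mem_tauSI (hstable : IStable X) (hcont : IContinuous X) {U : Set X}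
    (hU : IsOpen U) : iUpper U ∈ tauSI X := by
  refine ⟨hstable U hU, ?_⟩
  rintro E hE s hs ⟨a, haU, has⟩
  obtain ⟨b, hab, hbs⟩ := IBelow.exists_interpolate hstable hcont has
  obtain ⟨e, heE, hbe⟩ := hbs E hE s hs (sle_refl s)
  exact ⟨e, heE, a, haU, IBelow.mono_right hab hbe⟩

theorem subset_iUpper_of_mem_tauSI (hcont : IContinuous X) {U V : Set X} (hV : V ∈ tauSI X)
    (hVU : V ⊆ U) : V ⊆ iUpper U := by
  intro x hxV
  obtain ⟨a, hax, haV⟩ := hV.2 _ (hcont x).1 x (hcont x).2 hxV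
  exact ⟨a, hVU haV, hax⟩

end

theorem stmt15_general {X : Type u} [TopologicalSpace X]
    (hstable : IStable X) (hcont : IContinuous X)
    (U : Set X) (hU : IsOpen U) :
    {x : X | ∃ a ∈ U, IBelow a x} = ⋃₀ {V | V ∈ tauSI X ∧ V ⊆ U} :=
  Set.Subset.antisymm
    (Set.subset_sUnion_of_mem ⟨iUpper_mem_tauSI hstable hcont hU, iUpper_subset hU⟩)
    (Set.sUnion_subset fun _ ⟨hV, hVU⟩ => subset_iUpper_of_mem_tauSI hcont hV hVU)

/-- In an I-stable I-continuous T0 space, `↟_I U` is the τ_SI-interior of an open `U`. -/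
theorem stmt15 {X : Type u} [TopologicalSpace X] [T0Space X]
    (hstable : IStable X) (hcont : IContinuous X)
    (U : Set X) (hU : IsOpen U) :
    {x : X | ∃ a ∈ U, IBelow a x} = ⋃₀ {V | V ∈ tauSI X ∧ V ⊆ U} :=
  stmt15_general hstable hcont U hU
end
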